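/- For all integers n and k, qbinom(n,k) evaluated at q⁻¹ satisfies qbinom(n,k)(q) = q^{k(n-k)} · qbinom(n,k)(q⁻¹) as Laurent polynomials, i.e., the self-reciprocity of the Gaussian binomial extends to all integer entries. -/

import Mathlib

/-!
For `0 ≤ k ≤ n` the self-reciprocity `gauss n k = q^{k(n-k)} gauss n k (q⁻¹)` follows by induction
from the two `q`-Pascal rules, which are exchanged by `q ↦ q⁻¹` up to the factor `q^{k(n-k)}`.
In the two negative ranges `qbinom n k` is a sign times a monomial `q^e` times an ordinary Gaussian
binomial `gauss a b`; the sign is fixed by inversion and a monomial `q^e` shifts the reciprocity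
exponent by `2e`, and in both cases `2e + b(a-b) = k(n-k)`.
-/

open LaurentPolynomial in
/-- The ordinary Gaussian binomial coefficient as a (Laurent) polynomial in `q = T 1`,
defined by the `q`-Pascal rule; it is `0` when the lower entry exceeds the upper one. -/
noncomputable def gauss : ℕ → ℕ → LaurentPolynomial ℤ
  | _, 0 => 1
  | 0, _ + 1 => 0
  | a + 1, b + 1 => gauss a b + T ((b : ℤ) + 1) * gauss a (b + 1)

open LaurentPolynomial in
/-- The generalized `q`-binomial coefficient, a Laurent polynomial in `q = T 1`,
extended to arbitrary integer entries. -/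
noncomputable def qbinom (n k : ℤ) : LaurentPolynomial ℤ :=
  if 0 ≤ k ∧ k ≤ n then gauss n.toNat k.toNat
  else if n < 0 ∧ 0 ≤ k then
    (-1) ^ k.toNat * T (k * (2 * n - k + 1) / 2) * gauss (k - n - 1).toNat k.toNat
  else if k ≤ n ∧ n < 0 then
    (-1) ^ (n - k).toNat * T ((n * (n + 1) - k * (k + 1)) / 2) *
      gauss (-k - 1).toNat (-n - 1).toNat
  else 0

open LaurentPolynomial

section SelfReciprocal

variable {R : Type*}

lemma invert_eq_T_neg_mul_of_eq_T_mul_invert [CommSemiring R] {f : R[T;T⁻¹]} {a : ℤ}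
    (hf : f = T a * invert f) : invert f = T (-a) * f := by
  conv_lhs => rw [hf]
  rw [map_mul, invert_T, involutive_invert f]

lemma T_mul_eq_T_mul_invert [CommSemiring R] {f : R[T;T⁻¹]} {a : ℤ}
    (hf : f = T a * invert f) (e : ℤ) : T e * f = T (2 * e + a) * invert (T e * f) := by
  rw [map_mul, invert_T, invert_eq_T_neg_mul_of_eq_T_mul_invert hf, ← mul_assoc, ← mul_assoc,
    ← T_add, ← T_add]
  ring_nf

lemma neg_one_pow_mul_eq_T_mul_invert [CommRing R] {f : R[T;T⁻¹]} {a : ℤ}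
    (hf : f = T a * invert f) (j : ℕ) : (-1) ^ j * f = T a * invert ((-1) ^ j * f) := by
  rw [map_mul, map_pow, map_neg, map_one, mul_left_comm, ← hf]

end SelfReciprocal

lemma gauss_zero_right (a : ℕ) : gauss a 0 = 1 := by cases a <;> rfl

lemma gauss_succ_succ (a b : ℕ) :
    gauss (a + 1) (b + 1) = gauss a b + T ((b : ℤ) + 1) * gauss a (b + 1) := rfl

lemma gauss_succ_succ' (a b : ℕ) :
    gauss (a + 1) (b + 1) = T ((a : ℤ) - b) * gauss a b + gauss a (b + 1) := by
  induction a generalizing b with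
  | zero => cases b <;> simp [gauss]
  | succ a ih =>
    cases b with
    | zero =>
      conv_lhs => rw [gauss_succ_succ, ih 0]
      rw [gauss_succ_succ]
      simp only [gauss_zero_right, mul_add, mul_one, ← T_add]
      push_cast
      ring_nf
    | succ b =>
      conv_lhs => rw [gauss_succ_succ, ih b, ih (b + 1)]
      rw [gauss_succ_succ a, gauss_succ_succ a]
      simp only [mul_add, ← mul_assoc, ← T_add]
      push_cast
      ring_nf

lemma gauss_eq_T_mul_invert (a b : ℕ) :
    gauss a b = T ((b : ℤ) * (a - b)) * invert (gauss a b) := by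
  induction a generalizing b with
  | zero => cases b <;> simp [gauss]
  | succ a ih =>
    cases b with
    | zero => simp [gauss_zero_right]
    | succ b =>
      have hb := invert_eq_T_neg_mul_of_eq_T_mul_invert (ih b)
      have hb' := invert_eq_T_neg_mul_of_eq_T_mul_invert (ih (b + 1))
      conv_lhs => rw [gauss_succ_succ']
      rw [gauss_succ_succ]
      simp only [map_add, map_mul, invert_T, hb, hb', mul_add, ← mul_assoc, ← T_add]
      push_cast
      ring_nf
      rw [T_zero, mul_one]

lemma gauss_toNat_eq_T_mul_invert {a b : ℤ} (ha : 0 ≤ a) (hb : 0 ≤ b) :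
    gauss a.toNat b.toNat = T (b * (a - b)) * invert (gauss a.toNat b.toNat) := by
  simpa only [Int.toNat_of_nonneg ha, Int.toNat_of_nonneg hb] using
    gauss_eq_T_mul_invert a.toNat b.toNat

theorem qbinom_invert (n k : ℤ) :
    qbinom n k = T (k * (n - k)) * invert (qbinom n k) := by
  unfold qbinom
  split_ifs with hpos hneg
  · exact gauss_toNat_eq_T_mul_invert (hpos.1.trans hpos.2) hpos.1
  · rw [mul_assoc]
    apply neg_one_pow_mul_eq_T_mul_invert
    convert T_mul_eq_T_mul_invert
      (gauss_toNat_eq_T_mul_invert (a := k - n - 1) (by omega) hneg.2) _ using 3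
    have heven : Even (k * (2 * n - k + 1)) := by
      rw [show k * (2 * n - k + 1) = 2 * (k * n) - k * (k - 1) by ring]
      exact (even_two_mul _).sub (Int.even_mul_pred_self k)
    linear_combination -Int.two_mul_ediv_two_of_even heven
  · rw [mul_assoc]
    apply neg_one_pow_mul_eq_T_mul_invert
    convert T_mul_eq_T_mul_invert
      (gauss_toNat_eq_T_mul_invert (a := -k - 1) (b := -n - 1) (by omega) (by omega)) _ using 3
    have heven := (Int.even_mul_succ_self n).sub (Int.even_mul_succ_self k)
    linear_combination -Int.two_mul_ediv_two_of_even heven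
  · simp
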